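/- arXiv:2603.02921 — 2 statements merged into one kernel-verified Lean document; each statement's English description precedes it below -/
import Mathlib

section
/- Let L : ℝ → ℝ be differentiable and convex. Define the perspective function F(j,m) = m·L(j/m) for m > 0. Then for all j, j₀ ∈ ℝ and m, m₀ > 0, the inequality ∂F/∂j(j,m)·j₀ + ∂F/∂m(j,m)·m₀ ≤ F(j₀,m₀) holds, where ∂F/∂j(j,m) = L'(j/m) and ∂F/∂m(j,m) = L(j/m) − (j/m)·L'(j/m). -/
theorem ConvexOn.apply_add_deriv_mul_sub_le {S : Set ℝ} {f : ℝ → ℝ} {x y : ℝ}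
    (hf : ConvexOn ℝ S f) (hx : x ∈ S) (hy : y ∈ S) (hfx : DifferentiableAt ℝ f x) :
    f x + deriv f x * (y - x) ≤ f y := by
  rcases lt_trichotomy x y with hxy | rfl | hyx
  · have hslope := hf.deriv_le_slope hx hy hxy hfx
    rw [slope_def_field, le_div_iff₀ (sub_pos.mpr hxy)] at hslope
    linarith
  · simp
  · have hslope := hf.slope_le_deriv hy hx hyx hfx
    rw [slope_def_field, div_le_iff₀ (sub_pos.mpr hyx)] at hslope
    linarith

theorem perspective_subgradient_inequality_general
    (L : ℝ → ℝ) (hLd : Differentiable ℝ L) (hLc : ConvexOn ℝ Set.univ L)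
    (j j₀ m m₀ : ℝ) (hm₀ : 0 < m₀) :
    deriv L (j / m) * j₀ + (L (j / m) - (j / m) * deriv L (j / m)) * m₀
      ≤ m₀ * L (j₀ / m₀) := by
  have tangent := hLc.apply_add_deriv_mul_sub_le (Set.mem_univ (j / m))
    (Set.mem_univ (j₀ / m₀)) (hLd (j / m))
  calc deriv L (j / m) * j₀ + (L (j / m) - (j / m) * deriv L (j / m)) * m₀
      = m₀ * (L (j / m) + deriv L (j / m) * (j₀ / m₀ - j / m)) := by
        field_simp
        ring
    _ ≤ m₀ * L (j₀ / m₀) := mul_le_mul_of_nonneg_left tangent hm₀.le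

/-- Sub-gradient inequality for the perspective function `F(j,m) = m·L(j/m)` of a
differentiable convex Lagrangian `L`, with `F_j = L'(j/m)` and
`F_m = L(j/m) − (j/m)·L'(j/m)`. -/
theorem perspective_subgradient_inequality
    (L : ℝ → ℝ) (hLd : Differentiable ℝ L) (hLc : ConvexOn ℝ Set.univ L)
    (j j₀ m m₀ : ℝ) (hm : 0 < m) (hm₀ : 0 < m₀) :
    deriv L (j / m) * j₀ + (L (j / m) - (j / m) * deriv L (j / m)) * m₀
      ≤ m₀ * L (j₀ / m₀) :=
  perspective_subgradient_inequality_general L hLd hLc j j₀ m m₀ hm₀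
end

section
/- Let Ω = (0,T)×(0,1) and let ψ ∈ C¹(Ω̄) vanish on ∂Ω, and φ⁰ ∈ C¹(Ω̄) satisfy φ⁰ ≥ 0, φ⁰(t,0) = 0, φ⁰(t,1) = 1 for all t, and ψ_x + φ⁰_x ≥ 0. Then ∫_Ω (ψ + φ⁰) ψ_x dΩ ≥ −T/2. -/
open MeasureTheory

open Set

/-- Step 1 of the a-priori estimate: on `Ω = (0,T)×(0,1)`, for `ψ ∈ C¹(Ω̄)` vanishing
on `∂Ω` and `φ⁰ ∈ C¹(Ω̄)` with `φ⁰ ≥ 0`, `φ⁰(t,0) = 0`, `φ⁰(t,1) = 1`, and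
`ψ_x + φ⁰_x ≥ 0`, one has `∫_Ω (ψ + φ⁰) ψ_x ≥ −T/2`. -/
theorem potential_term_lower_bound
    (T : ℝ) (hT : 0 < T)
    (ψ φ0 : ℝ × ℝ → ℝ)
    (hψ : ContDiff ℝ 1 ψ) (hφ0 : ContDiff ℝ 1 φ0)
    (hψbd : ∀ p ∈ frontier (Set.Ioo 0 T ×ˢ Set.Ioo (0:ℝ) 1), ψ p = 0)
    (hφ0nonneg : ∀ p ∈ closure (Set.Ioo 0 T ×ˢ Set.Ioo (0:ℝ) 1), 0 ≤ φ0 p)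
    (hφ0left : ∀ t ∈ Set.Icc 0 T, φ0 (t, 0) = 0)
    (hφ0right : ∀ t ∈ Set.Icc 0 T, φ0 (t, 1) = 1)
    (hx : ∀ p ∈ closure (Set.Ioo 0 T ×ˢ Set.Ioo (0:ℝ) 1),
      0 ≤ fderiv ℝ ψ p ((0:ℝ), (1:ℝ)) + fderiv ℝ φ0 p ((0:ℝ), (1:ℝ))) :
    -(T/2) ≤ ∫ p in Set.Ioo 0 T ×ˢ Set.Ioo (0:ℝ) 1,
      (ψ p + φ0 p) * fderiv ℝ ψ p ((0:ℝ), (1:ℝ)) := by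
  have hcψ : Continuous ψ := hψ.continuous
  have hcφ : Continuous φ0 := hφ0.continuous
  have hcDψ : Continuous fun p => fderiv ℝ ψ p ((0:ℝ),(1:ℝ)) :=
    (hψ.continuous_fderiv one_ne_zero).clm_apply continuous_const
  have hcDφ : Continuous fun p => fderiv ℝ φ0 p ((0:ℝ),(1:ℝ)) :=
    (hφ0.continuous_fderiv one_ne_zero).clm_apply continuous_const
  have hclosure : closure (Set.Ioo 0 T ×ˢ Set.Ioo (0:ℝ) 1)
      = Set.Icc 0 T ×ˢ Set.Icc (0:ℝ) 1 := by
    rw [closure_prod_eq, closure_Ioo hT.ne, closure_Ioo one_ne_zero.symm]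
  have hfrontier : frontier (Set.Ioo 0 T ×ˢ Set.Ioo (0:ℝ) 1)
      = (Set.Icc 0 T ×ˢ Set.Icc (0:ℝ) 1) \ (Set.Ioo 0 T ×ˢ Set.Ioo (0:ℝ) 1) := by
    rw [(isOpen_Ioo.prod isOpen_Ioo).frontier_eq, hclosure]
  have hsub : (Set.Ioo 0 T ×ˢ Set.Ioo (0:ℝ) 1) ⊆ Set.Icc 0 T ×ˢ Set.Icc (0:ℝ) 1 := by
    rw [← hclosure]; exact subset_closure
  have hInt : ∀ g : ℝ × ℝ → ℝ, Continuous g →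
      IntegrableOn g (Set.Ioo 0 T ×ˢ Set.Ioo (0:ℝ) 1) := fun g hg =>
    (hg.continuousOn.integrableOn_compact (isCompact_Icc.prod isCompact_Icc)).mono_set hsub
  set A : ℝ × ℝ → ℝ := fun p => φ0 p * (fderiv ℝ ψ p ((0:ℝ),(1:ℝ)) + fderiv ℝ φ0 p ((0:ℝ),(1:ℝ))) with hA
  set B : ℝ × ℝ → ℝ := fun p => ψ p * fderiv ℝ ψ p ((0:ℝ),(1:ℝ)) - φ0 p * fderiv ℝ φ0 p ((0:ℝ),(1:ℝ)) with hBdef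
  have hAc : Continuous A := hcφ.mul (hcDψ.add hcDφ)
  have hBc : Continuous B := (hcψ.mul hcDψ).sub (hcφ.mul hcDφ)
  have hAint := hInt A hAc
  have hBint := hInt B hBc
  have hsplit : (∫ p in Set.Ioo 0 T ×ˢ Set.Ioo (0:ℝ) 1,
      (ψ p + φ0 p) * fderiv ℝ ψ p ((0:ℝ),(1:ℝ)))
      = (∫ p in Set.Ioo 0 T ×ˢ Set.Ioo (0:ℝ) 1, A p)
        + ∫ p in Set.Ioo 0 T ×ˢ Set.Ioo (0:ℝ) 1, B p := by
    rw [← integral_add hAint hBint]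
    apply integral_congr_ae
    filter_upwards with p
    simp only [hA, hBdef]; ring
  have hAnonneg : 0 ≤ ∫ p in Set.Ioo 0 T ×ˢ Set.Ioo (0:ℝ) 1, A p := by
    apply setIntegral_nonneg (measurableSet_Ioo.prod measurableSet_Ioo)
    intro p hp
    exact mul_nonneg (hφ0nonneg p (subset_closure hp)) (hx p (subset_closure hp))
  have hinner : ∀ t ∈ Set.Ioo (0:ℝ) T, (∫ x in Set.Ioo (0:ℝ) 1, B (t, x)) = -(1/2) := by
    intro t ht
    have htIcc : t ∈ Set.Icc 0 T := Ioo_subset_Icc_self ht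
    have hmem0 : ((t, (0:ℝ)) : ℝ × ℝ) ∈ frontier (Set.Ioo 0 T ×ˢ Set.Ioo (0:ℝ) 1) := by
      rw [hfrontier]
      refine ⟨⟨htIcc, left_mem_Icc.2 zero_le_one⟩, fun h => ?_⟩
      exact lt_irrefl 0 h.2.1
    have hmem1 : ((t, (1:ℝ)) : ℝ × ℝ) ∈ frontier (Set.Ioo 0 T ×ˢ Set.Ioo (0:ℝ) 1) := by
      rw [hfrontier]
      refine ⟨⟨htIcc, right_mem_Icc.2 zero_le_one⟩, fun h => ?_⟩
      exact lt_irrefl 1 h.2.2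
    have hψ0 : ψ (t, 0) = 0 := hψbd _ hmem0
    have hψ1 : ψ (t, 1) = 0 := hψbd _ hmem1
    have hφl : φ0 (t, 0) = 0 := hφ0left t htIcc
    have hφr : φ0 (t, 1) = 1 := hφ0right t htIcc
    have hg : ∀ x : ℝ, HasDerivAt (fun y => ψ (t, y)) (fderiv ℝ ψ (t, x) ((0:ℝ),(1:ℝ))) x := by
      intro x
      have hc : HasDerivAt (fun y : ℝ => ((t, y) : ℝ × ℝ)) ((0:ℝ),(1:ℝ)) x :=
        (hasDerivAt_const x t).prodMk (hasDerivAt_id x)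
      exact ((hψ.differentiable one_ne_zero (t, x)).hasFDerivAt).comp_hasDerivAt x hc
    have hf : ∀ x : ℝ, HasDerivAt (fun y => φ0 (t, y)) (fderiv ℝ φ0 (t, x) ((0:ℝ),(1:ℝ))) x := by
      intro x
      have hc : HasDerivAt (fun y : ℝ => ((t, y) : ℝ × ℝ)) ((0:ℝ),(1:ℝ)) x :=
        (hasDerivAt_const x t).prodMk (hasDerivAt_id x)
      exact ((hφ0.differentiable one_ne_zero (t, x)).hasFDerivAt).comp_hasDerivAt x hc
    have hh : ∀ x : ℝ, HasDerivAt (fun y => ψ (t, y) ^ 2 / 2 - φ0 (t, y) ^ 2 / 2) (B (t, x)) x := by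
      intro x
      have h1 := (((hg x).mul (hg x)).div_const 2).sub (((hf x).mul (hf x)).div_const 2)
      have h2 : HasDerivAt (fun y => ψ (t, y) ^ 2 / 2 - φ0 (t, y) ^ 2 / 2)
          ((fderiv ℝ ψ (t, x) ((0:ℝ),(1:ℝ)) * ψ (t, x) + ψ (t, x) * fderiv ℝ ψ (t, x) ((0:ℝ),(1:ℝ))) / 2
            - (fderiv ℝ φ0 (t, x) ((0:ℝ),(1:ℝ)) * φ0 (t, x) + φ0 (t, x) * fderiv ℝ φ0 (t, x) ((0:ℝ),(1:ℝ))) / 2) x := by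
        convert h1 using 2 <;> first | rfl | (simp only [Pi.mul_apply, Pi.sub_apply]; ring)
      convert h2 using 1
      simp only [hBdef]; ring
    have hcont : Continuous fun x : ℝ => B (t, x) :=
      hBc.comp (continuous_const.prodMk continuous_id)
    have hFTC : (∫ x in (0:ℝ)..1, B (t, x))
        = (ψ (t, 1) ^ 2 / 2 - φ0 (t, 1) ^ 2 / 2) - (ψ (t, 0) ^ 2 / 2 - φ0 (t, 0) ^ 2 / 2) :=
      intervalIntegral.integral_eq_sub_of_hasDerivAt (fun x _ => hh x)
        (hcont.intervalIntegrable 0 1)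
    rw [← MeasureTheory.integral_Ioc_eq_integral_Ioo, ← intervalIntegral.integral_of_le zero_le_one,
      hFTC, hψ0, hψ1, hφl, hφr]
    norm_num
  have hB : (∫ p in Set.Ioo 0 T ×ˢ Set.Ioo (0:ℝ) 1, B p) = -(T/2) := by
    have := hBint
    rw [Measure.volume_eq_prod] at this ⊢
    rw [setIntegral_prod _ this]
    rw [setIntegral_congr_fun measurableSet_Ioo (fun t ht => hinner t ht)]
    rw [setIntegral_const]
    rw [Real.volume_real_Ioo, max_eq_left (by linarith)]
    simp; ring
  rw [hsplit, hB]
  linarith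
end
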